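/- Every sufficiently long factor (length ≥ 15) of any infinite word in {010100110011, 0101001100110011}^ω has an abelian border of length at most 14. In particular, there exists an aperiodic infinite word all of whose factors of length at least 15 are abelian bordered. -/

import Mathlib

def factor {α : Type*} (w : ℕ → α) (i n : ℕ) : List α :=
  (List.range n).map (fun k => w (i + k))

def AbelianEquiv {α : Type*} [DecidableEq α] (u v : List α) : Prop :=
  ∀ a : α, u.count a = v.count a

/-- `u` has an abelian border of length `k`. -/
def HasAbelianBorderOfLength {α : Type*} [DecidableEq α] (u : List α) (k : ℕ) : Prop :=
  0 < k ∧ k < u.length ∧ AbelianEquiv (u.take k) (u.drop (u.length - k))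

def AbelianBordered {α : Type*} [DecidableEq α] (u : List α) : Prop :=
  ∃ k, HasAbelianBorderOfLength u k

/-- The block `x = 010100110011`. -/
def x12 : List ℕ := [0,1,0,1,0,0,1,1,0,0,1,1]

/-- The block `y = 0101001100110011`. -/
def y12 : List ℕ := [0,1,0,1,0,0,1,1,0,0,1,1,0,0,1,1]

/-- The prefix consisting of the first `n` blocks chosen according to `c`. -/
def pre12 (c : ℕ → Bool) : ℕ → List ℕ
  | 0 => []
  | n + 1 => pre12 c n ++ (if c n then y12 else x12)

/-- `w` is an infinite concatenation of copies of `x12` and `y12`. -/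
def WordIn12 (w : ℕ → ℕ) : Prop :=
  ∃ c : ℕ → Bool, ∀ n, factor w 0 (pre12 c n).length = pre12 c n

def UltimatelyPeriodic {α : Type*} (w : ℕ → α) : Prop :=
  ∃ p N, 0 < p ∧ ∀ n, N ≤ n → w (n + p) = w n


/-!
A factor of length at least 15 has its length-14 prefix and its length-14 suffix among the
length-14 factors of the word. Since both blocks have length at least 12, such a factor lies
in some `b b' b''` (with `b, b', b'' ∈ {x, y}`) and starts inside `b`; a finite check shows
that for any two of these windows `u`, `v` some prefix of `u` is abelian equivalent to the
suffix of `v` of the same length, which is then an abelian border of the whole factor.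

For the aperiodic word, put `y` exactly at the block indices `2 ^ K`. The runs of `x` in
between grow without bound, so a period `p` can be transported from the `y` at `2 ^ K` into the
following run, where the word has period 12; but `y` itself is not 12-periodic (`y₁ ≠ y₁₃`).
-/

section Factor

variable {α : Type*}

theorem length_factor (w : ℕ → α) (i n : ℕ) : (factor w i n).length = n := by
  simp [factor]

theorem getElem_factor (w : ℕ → α) (i n j : ℕ) (h : j < (factor w i n).length) :
    (factor w i n)[j] = w (i + j) := by
  simp [factor]

theorem take_factor (w : ℕ → α) (i : ℕ) {k n : ℕ} (h : k ≤ n) :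
    (factor w i n).take k = factor w i k := by
  rw [factor, ← List.map_take, List.take_range, min_eq_left h, factor]

theorem drop_factor (w : ℕ → α) (i m n : ℕ) :
    (factor w i n).drop m = factor w (i + m) (n - m) := by
  apply List.ext_getElem
  · simp [length_factor]
  · intro j _ _
    simp [factor, Nat.add_assoc]

variable [DecidableEq α]

theorem hasAbelianBorderOfLength_of_perm {l : List α} {m k : ℕ} (hm : m < l.length)
    (hk : 0 < k) (hkm : k ≤ m)
    (h : ((l.take m).take k).Perm ((l.drop (l.length - m)).drop (m - k))) :
    HasAbelianBorderOfLength l k := by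
  refine ⟨hk, by omega, fun a => ?_⟩
  rw [List.take_take, min_eq_left hkm, List.drop_drop,
    show l.length - m + (m - k) = l.length - k by omega] at h
  exact List.perm_iff_count.mp h a

theorem exists_hasAbelianBorderOfLength_factor {w : ℕ → α} {m : ℕ} (W : List (List α))
    (hw : ∀ i, factor w i m ∈ W)
    (hW : ∀ u ∈ W, ∀ v ∈ W, ∃ k ≤ m, 0 < k ∧ (u.take k).Perm (v.drop (m - k)))
    {i n : ℕ} (hn : m < n) :
    ∃ k ≤ m, HasAbelianBorderOfLength (factor w i n) k := by
  obtain ⟨k, hkm, hk, hperm⟩ := hW _ (hw i) _ (hw (i + (n - m)))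
  refine ⟨k, hkm, hasAbelianBorderOfLength_of_perm (by rwa [length_factor]) hk hkm ?_⟩
  rwa [length_factor, take_factor w i hn.le, drop_factor, Nat.sub_sub_self hn.le]

end Factor

section Blocks

def block12 (c : ℕ → Bool) (n : ℕ) : List ℕ := if c n then y12 else x12

variable (c : ℕ → Bool)

theorem pre12_succ (n : ℕ) : pre12 c (n + 1) = pre12 c n ++ block12 c n := rfl

theorem block12_of_true {n : ℕ} (h : c n = true) : block12 c n = y12 := by
  simp [block12, h]

theorem block12_of_false {n : ℕ} (h : c n = false) : block12 c n = x12 := by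
  simp [block12, h]

theorem block12_mem (n : ℕ) : block12 c n ∈ [x12, y12] := by
  unfold block12; split <;> simp

theorem twelve_le_length_block12 (n : ℕ) : 12 ≤ (block12 c n).length := by
  unfold block12; split <;> simp [x12, y12]

theorem length_pre12_succ (n : ℕ) :
    (pre12 c (n + 1)).length = (pre12 c n).length + (block12 c n).length := by
  simp [pre12_succ]

theorem twelve_mul_le_length_pre12 (n : ℕ) : 12 * n ≤ (pre12 c n).length := by
  induction n with
  | zero => simp
  | succ n ih => have := twelve_le_length_block12 c n; rw [length_pre12_succ]; omega

theorem exists_length_pre12_le_lt (i : ℕ) :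
    ∃ n, (pre12 c n).length ≤ i ∧ i < (pre12 c (n + 1)).length := by
  induction i with
  | zero => exact ⟨0, le_rfl, lt_of_lt_of_le (by norm_num) (twelve_mul_le_length_pre12 c 1)⟩
  | succ i ih =>
    obtain ⟨n, hn, hn'⟩ := ih
    by_cases h : i + 1 < (pre12 c (n + 1)).length
    · exact ⟨n, by omega, h⟩
    · refine ⟨n + 1, by omega, ?_⟩
      have := twelve_le_length_block12 c (n + 1)
      rw [length_pre12_succ c (n + 1)]; omega

theorem pre12_prefix_of_le {n n' : ℕ} (h : n ≤ n') : pre12 c n <+: pre12 c n' := by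
  induction n', h using Nat.le_induction with
  | base => exact List.prefix_rfl
  | succ n' _ ih => exact ih.trans (List.prefix_append _ _)

end Blocks

section WordIn12

def IsConcat12 (c : ℕ → Bool) (w : ℕ → ℕ) : Prop :=
  ∀ n, factor w 0 (pre12 c n).length = pre12 c n

variable {w : ℕ → ℕ} {c : ℕ → Bool}

theorem apply_eq_getElem_pre12 (hc : IsConcat12 c w)
    {n j : ℕ} (h : j < (pre12 c n).length) : w j = (pre12 c n)[j] := by
  have := List.getElem_of_eq (hc n) (by rwa [length_factor])
  rwa [getElem_factor, Nat.zero_add] at this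

theorem factor_eq_take_drop_pre12 (hc : IsConcat12 c w)
    {n i L : ℕ} (h : i + L ≤ (pre12 c n).length) :
    factor w i L = ((pre12 c n).drop i).take L := by
  apply List.ext_getElem
  · simp only [length_factor, List.length_take, List.length_drop]; omega
  · intro j hj _
    rw [getElem_factor, apply_eq_getElem_pre12 hc (n := n) (by rw [length_factor] at hj; omega)]
    simp

theorem apply_length_pre12_add (hc : IsConcat12 c w)
    {n t : ℕ} (ht : t < (block12 c n).length) :
    w ((pre12 c n).length + t) = (block12 c n)[t] := by
  rw [apply_eq_getElem_pre12 hc (n := n + 1) (by rw [length_pre12_succ]; omega)]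
  simp only [pre12_succ, List.getElem_append_right (Nat.le_add_right _ t),
    Nat.add_sub_cancel_left]

def windows14 : List (List ℕ) :=
  List.dedup <| [x12, y12].flatMap fun b => [x12, y12].flatMap fun b' => [x12, y12].flatMap
    fun b'' => (List.range b.length).map fun t => ((b ++ b' ++ b'').drop t).take 14

theorem factor_mem_windows14 (hc : IsConcat12 c w) (i : ℕ) :
    factor w i 14 ∈ windows14 := by
  obtain ⟨n, hn, hn'⟩ := exists_length_pre12_le_lt c i
  obtain ⟨t, rfl⟩ := Nat.exists_eq_add_of_le hn
  have hpre : pre12 c (n + 3) =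
      pre12 c n ++ (block12 c n ++ block12 c (n + 1) ++ block12 c (n + 2)) := by
    simp only [pre12_succ, List.append_assoc]
  have := twelve_le_length_block12 c (n + 1)
  have := twelve_le_length_block12 c (n + 2)
  rw [length_pre12_succ] at hn'
  rw [factor_eq_take_drop_pre12 hc (n := n + 3) (by simp only [hpre, List.length_append]; omega),
    hpre, List.drop_length_add_append]
  exact List.mem_dedup.2 <| List.mem_flatMap.2 ⟨_, block12_mem c n, List.mem_flatMap.2
    ⟨_, block12_mem c (n + 1), List.mem_flatMap.2
      ⟨_, block12_mem c (n + 2), List.mem_map.2 ⟨t, List.mem_range.2 (by omega), rfl⟩⟩⟩⟩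

set_option maxRecDepth 10000 in
theorem windows14_pairwise : ∀ u ∈ windows14, ∀ v ∈ windows14,
    ∃ k ≤ 14, 0 < k ∧ (u.take k).Perm (v.drop (14 - k)) := by
  decide

theorem exists_hasAbelianBorderOfLength_le_14 (hw : WordIn12 w) (i : ℕ) {n : ℕ}
    (hn : 15 ≤ n) :
    ∃ k ≤ 14, HasAbelianBorderOfLength (factor w i n) k := by
  obtain ⟨c, hc⟩ := hw
  exact exists_hasAbelianBorderOfLength_factor windows14 (factor_mem_windows14 hc)
    windows14_pairwise hn

theorem apply_length_pre12_add_of_block12_eq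
    (hc : IsConcat12 c w) {n n' t : ℕ}
    (h : block12 c n = block12 c n') (ht : t < (block12 c n).length) :
    w ((pre12 c n).length + t) = w ((pre12 c n').length + t) := by
  rw [apply_length_pre12_add hc ht, apply_length_pre12_add hc (h ▸ ht)]
  exact List.getElem_of_eq h ht

theorem length_pre12_add_of_run {a m : ℕ} (hrun : ∀ j < m, c (a + j) = false) :
    (pre12 c (a + m)).length = (pre12 c a).length + 12 * m := by
  induction m with
  | zero => simp
  | succ m ih =>
    rw [← Nat.add_assoc, length_pre12_succ, ih fun j hj => hrun j (by omega),
      block12_of_false c (hrun m (by omega))]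
    rfl

theorem apply_add_twelve_of_run (hc : IsConcat12 c w)
    {a m u : ℕ} (hrun : ∀ j < m + 1, c (a + j) = false) (hu : u < 12 * m) :
    w ((pre12 c a).length + u + 12) = w ((pre12 c a).length + u) := by
  have hx : ∀ j < m + 1, block12 c (a + j) = x12 := fun j hj => block12_of_false c (hrun j hj)
  obtain ⟨j, t, ht, rfl⟩ : ∃ j t, t < 12 ∧ u = 12 * j + t :=
    ⟨u / 12, u % 12, by omega, by omega⟩
  have hpos : ∀ j' ≤ j + 1, (pre12 c (a + j')).length = (pre12 c a).length + 12 * j' :=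
    fun j' hj' => length_pre12_add_of_run fun i hi => hrun i (by omega)
  have := apply_length_pre12_add_of_block12_eq hc (n := a + j) (n' := a + (j + 1)) (t := t)
    (by rw [hx j (by omega), hx (j + 1) (by omega)]) (by rw [hx j (by omega)]; simpa [x12])
  rw [hpos j (by omega), hpos (j + 1) (by omega)] at this
  convert this.symm using 2 <;> ring

end WordIn12

section Aperiodic

def blockWord (c : ℕ → Bool) (m : ℕ) : ℕ := (pre12 c (m + 1)).getD m 0

theorem isConcat12_blockWord (c : ℕ → Bool) : IsConcat12 c (blockWord c) := by
  intro n
  apply List.ext_getElem (length_factor _ _ _)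
  intro j _ hj
  have hj' : j < (pre12 c (j + 1)).length := by
    have := twelve_mul_le_length_pre12 c (j + 1); omega
  rw [getElem_factor, Nat.zero_add, blockWord, List.getD_eq_getElem _ _ hj']
  rcases le_total (j + 1) n with h | h
  · exact (pre12_prefix_of_le c h).getElem hj'
  · exact ((pre12_prefix_of_le c h).getElem hj).symm

def isPowTwo (n : ℕ) : Bool := decide (n = 2 ^ Nat.log 2 n)

theorem isPowTwo_two_pow (K : ℕ) : isPowTwo (2 ^ K) = true := by
  simp [isPowTwo, Nat.log_pow]

theorem isPowTwo_eq_false {K t : ℕ} (h₁ : 2 ^ K < t) (h₂ : t < 2 ^ (K + 1)) :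
    isPowTwo t = false := by
  rw [isPowTwo, Nat.log_eq_of_pow_le_of_lt_pow h₁.le h₂]
  simpa using h₁.ne'

theorem apply_add_mul_of_periodic {α : Type*} {w : ℕ → α} {p N : ℕ}
    (hper : ∀ n, N ≤ n → w (n + p) = w n)
    {q : ℕ} (hq : N ≤ q) (j : ℕ) : w (q + j * p) = w q := by
  induction j with
  | zero => simp
  | succ j ih => rw [Nat.succ_mul, ← Nat.add_assoc, hper _ (by omega), ih]

theorem not_ultimatelyPeriodic_blockWord_isPowTwo :
    ¬ UltimatelyPeriodic (blockWord isPowTwo) := by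
  rintro ⟨p, N, hp, hper⟩
  have hc := isConcat12_blockWord isPowTwo
  set K := N + 2 * p + 4
  have hK : K < 2 ^ K := Nat.lt_two_pow_self
  set P := (pre12 isPowTwo (2 ^ K)).length
  have hP : N ≤ P := by have := twelve_mul_le_length_pre12 isPowTwo (2 ^ K); omega
  have hy : block12 isPowTwo (2 ^ K) = y12 := block12_of_true isPowTwo (isPowTwo_two_pow K)
  have h₁ : blockWord isPowTwo (P + 1) = 1 := by
    rw [apply_length_pre12_add hc (by simp [hy, y12])]; simp [hy, y12]
  have h₁₃ : blockWord isPowTwo (P + 13) = 0 := by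
    rw [apply_length_pre12_add hc (by simp [hy, y12])]; simp [hy, y12]
  have hrun : ∀ j < (2 ^ K - 2) + 1, isPowTwo (2 ^ K + 1 + j) = false := fun j hj =>
    isPowTwo_eq_false (K := K) (by omega) (by rw [pow_succ 2 K]; omega)
  have hstart : (pre12 isPowTwo (2 ^ K + 1)).length = P + 16 := by
    rw [length_pre12_succ, hy]; rfl
  -- `P + 1 + 15 p` lands in the run of `x` that follows the `y`, with room for a shift by 12.
  have h12 := apply_add_twelve_of_run hc hrun (u := 15 * (p - 1)) (by omega)
  rw [hstart, show P + 16 + 15 * (p - 1) + 12 = P + 13 + 15 * p by omega,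
    show P + 16 + 15 * (p - 1) = P + 1 + 15 * p by omega,
    apply_add_mul_of_periodic hper (q := P + 13) (by omega),
    apply_add_mul_of_periodic hper (q := P + 1) (by omega), h₁, h₁₃] at h12
  exact zero_ne_one h12

end Aperiodic

/-- Every factor of length at least 15 of any word in `{x,y}^ω` has an abelian border
of length at most 14; in particular there is an aperiodic word all of whose factors of
length at least 15 are abelian bordered. -/
theorem stmt_12 :
    (∀ w : ℕ → ℕ, WordIn12 w → ∀ i n, 15 ≤ n →
      ∃ k, k ≤ 14 ∧ HasAbelianBorderOfLength (factor w i n) k) ∧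
    (∃ w : ℕ → ℕ, ¬ UltimatelyPeriodic w ∧
      ∀ i n, 15 ≤ n → AbelianBordered (factor w i n)) := by
  refine ⟨fun w hw i n hn => exists_hasAbelianBorderOfLength_le_14 hw i hn,
    blockWord isPowTwo, not_ultimatelyPeriodic_blockWord_isPowTwo, fun i n hn => ?_⟩
  obtain ⟨k, -, hk⟩ :=
    exists_hasAbelianBorderOfLength_le_14 ⟨isPowTwo, isConcat12_blockWord isPowTwo⟩ i hn
  exact ⟨k, hk⟩
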